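/- An edge e of a planar Delaunay triangulation D(X) is Gabriel if and only if, for each triangle of D(X) having e as a face, the vertex of that triangle opposite to e lies outside the open disc having e as a diameter. -/

import Mathlib

noncomputable section

abbrev Pt := EuclideanSpace ℝ (Fin 2)

instance : DecidableEq Pt := Classical.decEq _

/-- `X` is in general position: no three points collinear and no four points cocircular. -/
def GenPos (X : Finset Pt) : Prop :=
  (∀ s : Finset Pt, s ⊆ X → s.card = 3 → ¬ Collinear ℝ (s : Set Pt)) ∧
  (∀ s : Finset Pt, s ⊆ X → s.card = 4 → ¬ ∃ (c : Pt) (r : ℝ), ∀ p ∈ s, dist p c = r)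

/-- `T` is a Delaunay triangulation of `X`: a triangulation of `X` all of whose triangles
have empty open circumdiscs with respect to `X`. -/
structure IsDelaunay (X : Finset Pt) (T : Finset (Finset Pt)) : Prop where
  card : ∀ t ∈ T, t.card = 3
  verts : (⋃ t ∈ T, (t : Set Pt)) = (X : Set Pt)
  cover : (⋃ t ∈ T, convexHull ℝ (t : Set Pt)) = convexHull ℝ (X : Set Pt)
  inter : ∀ t ∈ T, ∀ t' ∈ T,
    convexHull ℝ (t : Set Pt) ∩ convexHull ℝ (t' : Set Pt)
      = convexHull ℝ ((t ∩ t' : Finset Pt) : Set Pt)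
  delaunay : ∀ t ∈ T, ∀ (c : Pt) (r : ℝ), (∀ v ∈ t, dist v c = r) →
    ∀ x ∈ X, dist x c < r → x ∈ t

/-!
Suppose some `x ∈ X` lies in the open disc with diameter `ab`, and let `m` be the midpoint of
`ab`. The triangle `t` of `D(X)` containing a point of the segment `[m, x]` close enough to `m`
also contains `m`; since triangles meet along common faces and `m` is interior to the edge `ab`,
`t` has `ab` as an edge. Let `o` be the circumcentre of `t`. The function
`y ↦ ‖y - o‖² - ‖y - m‖²` is affine, takes one value `k` at `a` and `b`, is `≤ k` at the third
vertex (which lies outside the disc with diameter `ab`) and `> k` at `x` (which lies inside that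
disc but outside the empty circumdisc of `t`). So `t` lies in the half-plane `{≤ k}`, whereas the
points of `[m, x]` other than `m` lie in `{> k}`.
-/

open Set Filter Topology
open scoped RealInnerProductSpace

section Geometry

variable {E : Type*} [NormedAddCommGroup E] [InnerProductSpace ℝ E]

lemma two_mul_inner_sub_eq_dist_sq_sub (y a o m : E) :
    2 * ⟪y - a, m - o⟫ = dist y o ^ 2 - dist y m ^ 2 - (dist a o ^ 2 - dist a m ^ 2) := by
  simp only [dist_eq_norm, ← real_inner_self_eq_norm_sq, inner_sub_left, inner_sub_right,
    real_inner_comm]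
  ring

lemma dist_left_midpoint_real (a b : E) : dist a (midpoint ℝ a b) = dist a b / 2 := by
  rw [dist_left_midpoint, Real.norm_two]; ring

lemma dist_right_midpoint_real (a b : E) : dist b (midpoint ℝ a b) = dist a b / 2 := by
  rw [midpoint_comm, dist_left_midpoint_real, dist_comm]

lemma lineMap_midpoint_notMem_convexHull {s : Set E} {a b x o : E} {θ : ℝ} (hθ : 0 < θ)
    (hb : dist b o = dist a o)
    (hs : ∀ v ∈ s, dist v o = dist a o ∧ dist a b / 2 ≤ dist v (midpoint ℝ a b))
    (hxo : dist a o ≤ dist x o) (hxm : dist x (midpoint ℝ a b) < dist a b / 2) :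
    AffineMap.lineMap (midpoint ℝ a b) x θ ∉ convexHull ℝ s := by
  set m := midpoint ℝ a b
  have hr : 0 ≤ dist a b / 2 := by positivity
  have hb' : ⟪b - a, m - o⟫ = 0 := by
    have key := two_mul_inner_sub_eq_dist_sq_sub b a o m
    rw [hb, dist_left_midpoint_real, dist_right_midpoint_real] at key
    linarith
  have hm : ⟪m - a, m - o⟫ = 0 := by
    have hma : m - a = (2⁻¹ : ℝ) • (b - a) := by
      simp only [m, midpoint_eq_smul_add, invOf_eq_inv]; module
    rw [hma, real_inner_smul_left, hb', mul_zero]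
  have hx : 0 < ⟪x - a, m - o⟫ := by
    have key := two_mul_inner_sub_eq_dist_sq_sub x a o m
    rw [dist_left_midpoint_real] at key
    nlinarith [dist_nonneg (x := x) (y := m), dist_nonneg (x := a) (y := o)]
  have hhalf : convexHull ℝ s ⊆ {y | ⟪y, m - o⟫ ≤ ⟪a, m - o⟫} := by
    refine convexHull_min (fun v hv => ?_) (convex_halfSpace_le
      ⟨fun u w => inner_add_left u w _, fun c u => real_inner_smul_left u _ c⟩ _)
    obtain ⟨hvo, hvm⟩ := hs v hv
    have key := two_mul_inner_sub_eq_dist_sq_sub v a o m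
    rw [hvo, dist_left_midpoint_real, inner_sub_left] at key
    change ⟪v, m - o⟫ ≤ ⟪a, m - o⟫
    nlinarith
  intro hq
  have hqa : ⟪AffineMap.lineMap m x θ, m - o⟫ ≤ ⟪a, m - o⟫ := hhalf hq
  have hsplit : AffineMap.lineMap m x θ - a = (1 - θ) • (m - a) + θ • (x - a) := by
    rw [AffineMap.lineMap_apply_module]; module
  have hq' := congrArg (fun y => ⟪y, m - o⟫) hsplit
  simp only [inner_add_left, real_inner_smul_left, hm] at hq'
  rw [inner_sub_left] at hq'
  nlinarith [mul_pos hθ hx]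

lemma exists_circumcenter_of_not_collinear {a b c : E} (h : ¬ Collinear ℝ {a, b, c}) :
    ∃ o : E, ∀ v ∈ ({a, b, c} : Set E), dist v o = dist a o := by
  let S : Affine.Simplex ℝ E 2 := ⟨![a, b, c], affineIndependent_iff_not_collinear_set.2 h⟩
  refine ⟨S.circumcenter, ?_⟩
  have hv : ∀ i, dist (S.points i) S.circumcenter = S.circumradius :=
    S.dist_circumcenter_eq_circumradius
  rintro v (rfl | rfl | rfl)
  · rfl
  · exact (hv 1).trans (hv 0).symm
  · exact (hv 2).trans (hv 0).symm

end Geometry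

lemma Finset.exists_eq_insert_insert_singleton_of_card_eq_three {α : Type*} [DecidableEq α]
    {t : Finset α} (h : t.card = 3) {a b : α} (ha : a ∈ t) (hb : b ∈ t) (hab : a ≠ b) :
    ∃ c, t = {a, b, c} := by
  have hb' : b ∈ t.erase a := Finset.mem_erase.2 ⟨hab.symm, hb⟩
  obtain ⟨c, hc⟩ := Finset.card_eq_one.1 (by
    rw [Finset.card_erase_of_mem hb', Finset.card_erase_of_mem ha, h] :
    ((t.erase a).erase b).card = 1)
  exact ⟨c, by rw [← hc, Finset.insert_erase hb', Finset.insert_erase ha]⟩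

section Collinear

variable {E : Type*} [AddCommGroup E] [Module ℝ E]

lemma collinear_of_midpoint_mem_segment {a b c : E} (h : midpoint ℝ a b ∈ segment ℝ b c) :
    Collinear ℝ {a, b, c} := by
  have hspan : midpoint ℝ a b ∈ affineSpan ℝ {b, c} :=
    convexHull_subset_affineSpan _ (by rwa [convexHull_pair])
  have ha : AffineMap.lineMap b (midpoint ℝ a b) (2 : ℝ) = a := by
    simp only [AffineMap.lineMap_apply_module, midpoint_eq_smul_add, invOf_eq_inv]
    module
  exact collinear_insert_of_mem_affineSpan_pair
    (ha ▸ AffineMap.lineMap_mem _ (mem_affineSpan ℝ (by simp)) hspan)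

lemma left_mem_of_midpoint_mem_convexHull {a b c : E} {s : Set E} (h : ¬ Collinear ℝ {a, b, c})
    (hs : s ⊆ {a, b, c}) (hm : midpoint ℝ a b ∈ convexHull ℝ s) : a ∈ s := by
  by_contra ha
  have hbc : s ⊆ {b, c} := fun v hv => (hs hv).resolve_left (ne_of_mem_of_not_mem hv ha)
  have hseg := convexHull_mono hbc hm
  rw [convexHull_pair] at hseg
  exact h (collinear_of_midpoint_mem_segment hseg)

end Collinear

lemma exists_lineMap_mem_convexHull_of_segment_subset {E : Type*} [NormedAddCommGroup E]
    [NormedSpace ℝ E] {T : Finset (Finset E)} {m x : E}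
    (h : segment ℝ m x ⊆ ⋃ t ∈ T, convexHull ℝ (t : Set E)) :
    ∃ t ∈ T, ∃ θ : ℝ, 0 < θ ∧ m ∈ convexHull ℝ (t : Set E) ∧
      AffineMap.lineMap m x θ ∈ convexHull ℝ (t : Set E) := by
  have hnear : ∀ᶠ y in 𝓝 m, ∀ t ∈ T,
      y ∈ convexHull ℝ (t : Set E) → m ∈ convexHull ℝ (t : Set E) := by
    refine (eventually_all_finset T).2 fun t _ => ?_
    by_cases hmt : m ∈ convexHull ℝ (t : Set E)
    · exact Eventually.of_forall fun _ _ => hmt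
    · filter_upwards [(t.finite_toSet.isClosed_convexHull (𝕜 := ℝ)).isOpen_compl.mem_nhds hmt]
        with y hy hyt using absurd hyt hy
  have hlim : Tendsto (AffineMap.lineMap m x) (𝓝[>] (0 : ℝ)) (𝓝 m) := by
    simpa using ((AffineMap.lineMap_continuous (R := ℝ) (p := m) (q := x)).tendsto 0).mono_left
      nhdsWithin_le_nhds
  obtain ⟨θ, hθnear, hθ⟩ := ((hlim.eventually hnear).and (Ioo_mem_nhdsGT one_pos)).exists
  obtain ⟨t, ht, hqt⟩ := mem_iUnion₂.1 (h (lineMap_mem_segment ℝ m x (Ioo_subset_Icc_self hθ)))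
  exact ⟨t, ht, θ, hθ.1, hθnear t ht hqt, hqt⟩

namespace IsDelaunay

variable {X : Finset Pt} {T : Finset (Finset Pt)}

lemma subset (hT : IsDelaunay X T) {t : Finset Pt} (ht : t ∈ T) : t ⊆ X := fun v hv => by
  have hvX : v ∈ ⋃ t ∈ T, (t : Set Pt) := Set.mem_biUnion ht hv
  rwa [hT.verts, Finset.mem_coe] at hvX

lemma not_collinear (hX : GenPos X) (hT : IsDelaunay X T) {t : Finset Pt} (ht : t ∈ T) :
    ¬ Collinear ℝ (t : Set Pt) :=
  hX.1 t (hT.subset ht) (hT.card t ht)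

lemma mem_of_midpoint_mem_convexHull (hX : GenPos X) (hT : IsDelaunay X T) {a b : Pt}
    (hab : a ≠ b) {t₀ t : Finset Pt} (ht₀ : t₀ ∈ T) (hab₀ : ({a, b} : Finset Pt) ⊆ t₀)
    (ht : t ∈ T) (hm : midpoint ℝ a b ∈ convexHull ℝ (t : Set Pt)) : a ∈ t ∧ b ∈ t := by
  obtain ⟨c, rfl⟩ := Finset.exists_eq_insert_insert_singleton_of_card_eq_three (hT.card t₀ ht₀)
    (hab₀ (by simp)) (hab₀ (by simp)) hab
  have hcol : ¬ Collinear ℝ {a, b, c} := by simpa using hT.not_collinear hX ht₀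
  have hm' : midpoint ℝ a b ∈ convexHull ℝ ((t ∩ {a, b, c} : Finset Pt) : Set Pt) := by
    rw [← hT.inter t ht _ ht₀]
    exact ⟨hm, segment_subset_convexHull (by simp) (by simp) (midpoint_mem_segment a b)⟩
  have hs : ((t ∩ {a, b, c} : Finset Pt) : Set Pt) ⊆ {a, b, c} := by simp
  constructor
  · exact (Finset.mem_inter.1 (left_mem_of_midpoint_mem_convexHull hcol hs hm')).1
  · refine (Finset.mem_inter.1 (left_mem_of_midpoint_mem_convexHull (a := b) (b := a) (c := c)
      (s := ((t ∩ {a, b, c} : Finset Pt) : Set Pt)) ?_ ?_ ?_)).1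
    · rwa [Set.insert_comm]
    · rwa [Set.insert_comm]
    · rwa [midpoint_comm]

end IsDelaunay

theorem gabriel_iff_opposite_vertices_outside
    (X : Finset Pt) (T : Finset (Finset Pt)) (hX : GenPos X) (hT : IsDelaunay X T)
    (a b : Pt) (hab : a ≠ b) (he : ∃ t ∈ T, ({a, b} : Finset Pt) ⊆ t) :
    (∀ x ∈ X, dist a b / 2 ≤ dist x (midpoint ℝ a b)) ↔
    (∀ t ∈ T, ({a, b} : Finset Pt) ⊆ t →
      ∀ v ∈ t, v ∉ ({a, b} : Finset Pt) → dist a b / 2 ≤ dist v (midpoint ℝ a b)) := by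
  refine ⟨fun hL t ht _ v hv _ => hL v (hT.subset ht hv), fun hR x hx => ?_⟩
  by_contra! hxm
  obtain ⟨t₀, ht₀, hab₀⟩ := he
  have hmX : midpoint ℝ a b ∈ convexHull ℝ (X : Set Pt) :=
    segment_subset_convexHull (hT.subset ht₀ (hab₀ (by simp))) (hT.subset ht₀ (hab₀ (by simp)))
      (midpoint_mem_segment a b)
  obtain ⟨t, ht, θ, hθ, hmt, hqt⟩ := exists_lineMap_mem_convexHull_of_segment_subset (T := T)
    (by rw [hT.cover]; exact (convex_convexHull ℝ _).segment_subset hmX (subset_convexHull ℝ _ hx))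
  obtain ⟨ha, hb⟩ := hT.mem_of_midpoint_mem_convexHull hX hab ht₀ hab₀ ht hmt
  obtain ⟨c, rfl⟩ :=
    Finset.exists_eq_insert_insert_singleton_of_card_eq_three (hT.card _ ht) ha hb hab
  obtain ⟨o, ho⟩ := exists_circumcenter_of_not_collinear (by simpa using hT.not_collinear hX ht)
  have hout : ∀ v ∈ ({a, b, c} : Finset Pt), dist a b / 2 ≤ dist v (midpoint ℝ a b) := by
    intro v hv
    by_cases hvab : v ∈ ({a, b} : Finset Pt)
    · simp only [Finset.mem_insert, Finset.mem_singleton] at hvab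
      rcases hvab with rfl | rfl
      exacts [(dist_left_midpoint_real _ _).ge, (dist_right_midpoint_real _ _).ge]
    · exact hR _ ht (by simp [Finset.insert_subset_iff]) v hv hvab
  have hxt : x ∉ ({a, b, c} : Finset Pt) := fun h => (hout x h).not_gt hxm
  have hxo : dist a o ≤ dist x o := not_lt.1 fun h =>
    hxt (hT.delaunay _ ht o _ (fun v hv => ho v (by simpa using hv)) x hx h)
  exact lineMap_midpoint_notMem_convexHull hθ (ho b (by simp))
    (fun v hv => ⟨ho v (by simpa using hv), hout v hv⟩) hxo hxm hqt
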